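/- arXiv:1803.07683 — 2 statements merged into one kernel-verified Lean document; each statement's English description precedes it below -/
import Mathlib

section
/- For every ONE-IN-THREE 3SAT instance φ, the set B_φ = {(x, y) ∈ (Fin n → ℝ) × ℝ : (ε i 0 · x (v i 0) + ε i 1 · x (v i 1) + ε i 2 · x (v i 2) + 1)·y = 0 for all i ∈ Fin k and 1 - (x j)^2 = 0 for all j ∈ Fin n} is a bounded subset of ℝ^{n+1} if and only if φ is not satisfiable. -/
open Finset Filter

noncomputable def Eps (c : Bool) : ℝ := if c then 1 else -1

def OneInThreeSat {n k : ℕ} (v : Fin k → Fin 3 → Fin n) (b : Fin k → Fin 3 → Bool) : Prop :=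
  ∃ a : Fin n → Bool, ∀ i : Fin k, ∃! t : Fin 3, a (v i t) = b i t

noncomputable def sPhi {n k : ℕ} (v : Fin k → Fin 3 → Fin n) (b : Fin k → Fin 3 → Bool)
    (x : Fin n → ℝ) : ℝ :=
  (∑ i : Fin k,
    (Eps (b i 0) * x (v i 0) + Eps (b i 1) * x (v i 1) + Eps (b i 2) * x (v i 2) + 1) ^ 2)
  + ∑ j : Fin n, (1 - x j ^ 2) ^ 2

noncomputable def Bset {n k : ℕ} (v : Fin k → Fin 3 → Fin n) (b : Fin k → Fin 3 → Bool) :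
    Set ((Fin n → ℝ) × ℝ) :=
  {q | (∀ i : Fin k,
          (Eps (b i 0) * q.1 (v i 0) + Eps (b i 1) * q.1 (v i 1)
            + Eps (b i 2) * q.1 (v i 2) + 1) * q.2 = 0) ∧
       (∀ j : Fin n, 1 - q.1 j ^ 2 = 0)}

lemma eps_mul (c d : Bool) : Eps c * (if d then (1:ℝ) else -1) = if d = c then 1 else -1 := by
  cases c <;> cases d <;> simp [Eps]

theorem Bset_bounded_iff_not_satisfiable {n k : ℕ}
    (v : Fin k → Fin 3 → Fin n) (b : Fin k → Fin 3 → Bool) :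
    Bornology.IsBounded (Bset v b) ↔ ¬ OneInThreeSat v b := by
  classical
  constructor
  · intro hb hsat
    obtain ⟨a, ha⟩ := hsat
    obtain ⟨r, hr⟩ := hb.exists_norm_le
    set x : Fin n → ℝ := fun j => if a j then 1 else -1 with hx
    have hmem : ∀ y : ℝ, ((x, y) : (Fin n → ℝ) × ℝ) ∈ Bset v b := by
      intro y
      constructor
      · intro i
        obtain ⟨t, ht, hu⟩ := ha i
        have hfac : Eps (b i 0) * x (v i 0) + Eps (b i 1) * x (v i 1)
            + Eps (b i 2) * x (v i 2) + 1 = 0 := by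
          simp only [hx]
          rw [eps_mul, eps_mul, eps_mul]
          fin_cases t
          · have ht' : a (v i 0) = b i 0 := ht
            have h1 : ¬ (a (v i 1) = b i 1) := fun h => by simpa using hu 1 h
            have h2 : ¬ (a (v i 2) = b i 2) := fun h => by simpa using hu 2 h
            simp [ht', h1, h2]
          · have ht' : a (v i 1) = b i 1 := ht
            have h1 : ¬ (a (v i 0) = b i 0) := fun h => by simpa using hu 0 h
            have h2 : ¬ (a (v i 2) = b i 2) := fun h => by simpa using hu 2 h
            simp [ht', h1, h2]
          · have ht' : a (v i 2) = b i 2 := ht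
            have h1 : ¬ (a (v i 0) = b i 0) := fun h => by simpa using hu 0 h
            have h2 : ¬ (a (v i 1) = b i 1) := fun h => by simpa using hu 1 h
            simp [ht', h1, h2]
        simp [hfac]
      · intro j
        simp only [hx]
        by_cases h : a j <;> simp [h]
    have h1 := hr (x, |r| + 1) (hmem _)
    have h2 : |r| + 1 ≤ ‖((x, |r| + 1) : (Fin n → ℝ) × ℝ)‖ := by
      have h3 := norm_snd_le ((x, |r| + 1) : (Fin n → ℝ) × ℝ)
      rw [Real.norm_eq_abs, abs_of_nonneg (by positivity)] at h3
      exact h3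
    have := abs_nonneg r
    have := le_abs_self r
    linarith
  · intro hns
    apply (Metric.isBounded_closedBall (x := (0 : (Fin n → ℝ) × ℝ)) (r := 1)).subset
    rintro ⟨x, y⟩ ⟨hc, hsq⟩
    have hpm : ∀ j, x j = 1 ∨ x j = -1 := by
      intro j
      have h : (x j - 1) * (x j + 1) = 0 := by have := hsq j; nlinarith
      rcases mul_eq_zero.1 h with h | h
      · left; linarith
      · right; linarith
    set a : Fin n → Bool := fun j => decide (x j = 1) with hadef
    have hterm : ∀ i t, Eps (b i t) * x (v i t) = if a (v i t) = b i t then (1:ℝ) else -1 := by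
      intro i t
      rcases hpm (v i t) with h | h <;> cases hbt : b i t <;>
        simp [Eps, hadef, h, hbt] <;> norm_num
    simp only [OneInThreeSat, not_exists] at hns
    obtain ⟨i, hi⟩ := not_forall.1 (hns a)
    have hy : y = 0 := by
      have hc' := hc i
      simp only at hc'
      rw [hterm i 0, hterm i 1, hterm i 2] at hc'
      by_cases h0 : a (v i 0) = b i 0 <;> by_cases h1 : a (v i 1) = b i 1 <;>
        by_cases h2 : a (v i 2) = b i 2
      · norm_num [h0, h1, h2] at hc'; exact hc'
      · norm_num [h0, h1, h2] at hc'; exact hc'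
      · norm_num [h0, h1, h2] at hc'; exact hc'
      · exact absurd ⟨0, h0, fun t' ht' => by
          fin_cases t' <;> first | rfl | exact absurd ht' h1 | exact absurd ht' h2⟩ hi
      · norm_num [h0, h1, h2] at hc'; exact hc'
      · exact absurd ⟨1, h1, fun t' ht' => by
          fin_cases t' <;> first | rfl | exact absurd ht' h0 | exact absurd ht' h2⟩ hi
      · exact absurd ⟨2, h2, fun t' ht' => by
          fin_cases t' <;> first | rfl | exact absurd ht' h0 | exact absurd ht' h1⟩ hi
      · norm_num [h0, h1, h2] at hc'; exact hc'
    rw [Metric.mem_closedBall, dist_zero_right]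
    have hx1 : ‖x‖ ≤ 1 := by
      rw [pi_norm_le_iff_of_nonneg zero_le_one]
      intro j
      rcases hpm j with h | h <;> simp [h]
    calc ‖((x, y) : (Fin n → ℝ) × ℝ)‖ = max ‖x‖ ‖y‖ := rfl
      _ ≤ 1 := by simp [hy, hx1]
end

section
/- For every ONE-IN-THREE 3SAT instance φ, the quadratic module Q generated in ℝ[X, Y] by the polynomials C_i·Y, -C_i·Y (i ∈ Fin k) and 1 - X_j², X_j² - 1 (j ∈ Fin n) is Archimedean if and only if φ is not satisfiable. -/
open Finset Filter

open MvPolynomial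

/-- A real polynomial is a sum of squares. -/
def IsSos {σ : Type*} (p : MvPolynomial σ ℝ) : Prop :=
  ∃ (r : ℕ) (q : Fin r → MvPolynomial σ ℝ), p = ∑ l : Fin r, q l ^ 2

/-- The clause polynomial `C_i = ε i 0 · X_{v i 0} + ε i 1 · X_{v i 1} + ε i 2 · X_{v i 2} + 1`
in `ℝ[X]`. -/
noncomputable def Cpoly {n k : ℕ} (v : Fin k → Fin 3 → Fin n) (b : Fin k → Fin 3 → Bool)
    (i : Fin k) : MvPolynomial (Fin n) ℝ :=
  C (Eps (b i 0)) * X (v i 0) + C (Eps (b i 1)) * X (v i 1) + C (Eps (b i 2)) * X (v i 2) + 1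

/-- Membership in the quadratic module generated by the finite family `g`. -/
def InQuadraticModule {σ ι : Type*} [Fintype ι] (g : ι → MvPolynomial σ ℝ)
    (p : MvPolynomial σ ℝ) : Prop :=
  ∃ (σ₀ : MvPolynomial σ ℝ) (s : ι → MvPolynomial σ ℝ),
    IsSos σ₀ ∧ (∀ l : ι, IsSos (s l)) ∧ p = σ₀ + ∑ l : ι, s l * g l

/-- The generators `C_i·Y, -C_i·Y` (`i ∈ Fin k`) and `1 - X_j², X_j² - 1` (`j ∈ Fin n`)
of the quadratic module in `ℝ[X, Y]`. -/
noncomputable def archGens {n k : ℕ} (v : Fin k → Fin 3 → Fin n) (b : Fin k → Fin 3 → Bool) :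
    (Fin k ⊕ Fin k) ⊕ (Fin n ⊕ Fin n) → MvPolynomial (Fin n ⊕ Unit) ℝ :=
  Sum.elim
    (Sum.elim
      (fun i => rename Sum.inl (Cpoly v b i) * X (Sum.inr ()))
      (fun i => -(rename Sum.inl (Cpoly v b i) * X (Sum.inr ()))))
    (Sum.elim
      (fun j => 1 - X (Sum.inl j) ^ 2)
      (fun j => X (Sum.inl j) ^ 2 - 1))


/-!
If `a` satisfies the instance, every generator vanishes at `(ε(a), y)` for all `y ∈ ℝ`, so each
element of the quadratic module is nonnegative there, while `R - ∑ Xⱼ² - Y²` is not once `y` is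
large. Conversely, if no assignment satisfies the instance, then at every vertex of `{±1}ⁿ` some
clause polynomial takes a value in `{-2, 2, 4}`, so `∑ Cᵢ² - 4 ≥ 0` on the cube. Interpolating by
squares of vertex indicators and applying the Combinatorial Nullstellensatz to the remainder,
`∑ Cᵢ² - 4 = s + ∑ qⱼ (Xⱼ² - 1)` with `s` a sum of squares; multiplying by `Y² / 4` expresses
`-Y²` modulo the ideal `(Cᵢ Y, Xⱼ² - 1)`, which the quadratic module contains because it contains
each of these generators with both signs.
-/
theorem IsSumSq.map {R S F : Type*} [NonAssocSemiring R] [NonAssocSemiring S] [FunLike F R S]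
    [RingHomClass F R S] (f : F) {s : R} (hs : IsSumSq s) : IsSumSq (f s) := by
  induction hs with
  | zero => simp [IsSumSq.zero]
  | sq_add a _ ih => simpa using ih.sq_add (f a)

section SumsOfSquares

variable {σ : Type*} {p : MvPolynomial σ ℝ}

theorem isSos_iff_isSumSq : IsSos p ↔ IsSumSq p := by
  constructor
  · rintro ⟨r, q, rfl⟩
    exact IsSumSq.sum_sq _ _
  · intro hp
    induction hp with
    | zero => exact ⟨0, Fin.elim0, by simp⟩
    | sq_add a _ ih =>
      obtain ⟨r, q, rfl⟩ := ih
      exact ⟨r + 1, Fin.cons a q, by simp [Fin.sum_univ_succ, sq]⟩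

theorem IsSumSq.eval_nonneg (hp : IsSumSq p) (z : σ → ℝ) : 0 ≤ eval z p :=
  (hp.map (eval z)).nonneg

end SumsOfSquares

namespace InQuadraticModule

variable {σ ι : Type*} [Fintype ι] {g : ι → MvPolynomial σ ℝ} {p q : MvPolynomial σ ℝ}

theorem of_isSumSq (hp : IsSumSq p) : InQuadraticModule g p :=
  ⟨p, 0, isSos_iff_isSumSq.2 hp, fun _ => isSos_iff_isSumSq.2 .zero, by simp⟩

theorem add (hp : InQuadraticModule g p) (hq : InQuadraticModule g q) :
    InQuadraticModule g (p + q) := by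
  obtain ⟨σ₀, s, hσ₀, hs, rfl⟩ := hp
  obtain ⟨τ₀, t, hτ₀, ht, rfl⟩ := hq
  simp only [isSos_iff_isSumSq] at *
  refine ⟨σ₀ + τ₀, s + t, isSos_iff_isSumSq.2 (hσ₀.add hτ₀),
    fun l => isSos_iff_isSumSq.2 ((hs l).add (ht l)), ?_⟩
  simp only [Pi.add_apply, add_mul, Finset.sum_add_distrib]
  ring

theorem sum {κ : Type*} {s : Finset κ} {f : κ → MvPolynomial σ ℝ}
    (hf : ∀ x ∈ s, InQuadraticModule g (f x)) : InQuadraticModule g (∑ x ∈ s, f x) :=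
  Finset.sum_induction f _ (fun _ _ => add) (of_isSumSq .zero) hf

theorem isSumSq_mul_gen (hp : IsSumSq p) (l : ι) : InQuadraticModule g (p * g l) := by
  classical
  refine ⟨0, Pi.single l p, isSos_iff_isSumSq.2 .zero, fun l' => ?_, ?_⟩
  · rw [isSos_iff_isSumSq]
    rcases eq_or_ne l' l with rfl | h
    · simp [hp]
    · simp [h, IsSumSq.zero]
  · simp [Pi.single_apply]

/-- `u = ((u + 1) / 2)² - ((u - 1) / 2)²` -/
theorem mul_gen_of_neg {l l' : ι} (h : g l' = -g l) (u : MvPolynomial σ ℝ) :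
    InQuadraticModule g (u * g l) := by
  have h4 : (C 2⁻¹ : MvPolynomial σ ℝ) ^ 2 * 4 = 1 := by
    rw [← C_pow, ← map_ofNat (C (σ := σ)) 4, ← C_mul]; norm_num
  have hu : u * g l = (C 2⁻¹ * (u + 1)) ^ 2 * g l + (C 2⁻¹ * (u - 1)) ^ 2 * g l' := by
    rw [h]; linear_combination (-(u * g l)) * h4
  rw [hu]
  exact (isSumSq_mul_gen (IsSquare.sq _).isSumSq l).add
    (isSumSq_mul_gen (IsSquare.sq _).isSumSq l')

theorem eval_nonneg (hp : InQuadraticModule g p) {z : σ → ℝ} (hg : ∀ l, 0 ≤ eval z (g l)) :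
    0 ≤ eval z p := by
  obtain ⟨σ₀, s, hσ₀, hs, rfl⟩ := hp
  rw [map_add, map_sum]
  refine add_nonneg ((isSos_iff_isSumSq.1 hσ₀).eval_nonneg z) (Finset.sum_nonneg fun l _ => ?_)
  rw [map_mul]
  exact mul_nonneg ((isSos_iff_isSumSq.1 (hs l)).eval_nonneg z) (hg l)

end InQuadraticModule

theorem eps_sq (c : Bool) : Eps c ^ 2 = 1 := by cases c <;> simp [Eps]

theorem eps_mul_eps (c d : Bool) : Eps c * Eps d = 2 * (if d = c then 1 else 0) - 1 := by
  cases c <;> cases d <;> norm_num [Eps]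

section Cube

variable {n : ℕ}

noncomputable def cubePoint (a : Fin n → Bool) : Fin n → ℝ := fun j => Eps (a j)

theorem cubePoint_decide_eq_one {x : Fin n → ℝ} (hx : ∀ j, x j = 1 ∨ x j = -1) :
    cubePoint (fun j => decide (x j = 1)) = x := by
  funext j
  rcases hx j with h | h <;> norm_num [cubePoint, Eps, h]

noncomputable def cubeIndicator (a : Fin n → Bool) : MvPolynomial (Fin n) ℝ :=
  ∏ j, C 2⁻¹ * (1 + C (Eps (a j)) * X j)

theorem eval_cubePoint_cubeIndicator (a a' : Fin n → Bool) :
    eval (cubePoint a') (cubeIndicator a) = if a = a' then 1 else 0 := by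
  simp only [cubeIndicator, map_prod, map_mul, map_add, map_one, eval_C, eval_X, cubePoint,
    eps_mul_eps]
  split_ifs with h
  · subst h
    simp
  · obtain ⟨j, hj⟩ := Function.ne_iff.1 h
    exact Finset.prod_eq_zero (Finset.mem_univ j) (by simp [hj.symm])

theorem exists_isSumSq_eval_cubePoint_eq {w : (Fin n → Bool) → ℝ} (hw : ∀ a, 0 ≤ w a) :
    ∃ s : MvPolynomial (Fin n) ℝ, IsSumSq s ∧ ∀ a, eval (cubePoint a) s = w a := by
  refine ⟨∑ a, (C √(w a) * cubeIndicator a) ^ 2, IsSumSq.sum_sq _ _, fun a' => ?_⟩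
  simp [eval_cubePoint_cubeIndicator, Real.sq_sqrt (hw a')]

theorem exists_eq_sum_mul_X_sq_sub_one {f : MvPolynomial (Fin n) ℝ}
    (hf : ∀ a, eval (cubePoint a) f = 0) :
    ∃ q : Fin n → MvPolynomial (Fin n) ℝ, f = ∑ j, q j * (X j ^ 2 - 1) := by
  obtain ⟨h, -, hfh⟩ := combinatorial_nullstellensatz_exists_linearCombination
    (fun _ => {1, -1}) (fun _ => Finset.insert_nonempty _ _) f fun x hx => by
      rw [← cubePoint_decide_eq_one (x := x) (by simpa using hx)]
      exact hf _
  refine ⟨h, hfh.trans ?_⟩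
  rw [Finsupp.linearCombination_apply, Finsupp.sum_fintype _ _ (by simp)]
  refine Finset.sum_congr rfl fun j _ => ?_
  simp only [smul_eq_mul]
  rw [Finset.prod_pair (by norm_num)]
  simp only [map_one, map_neg, sub_neg_eq_add]
  ring

theorem exists_isSumSq_add_sum_mul_X_sq_sub_one {f : MvPolynomial (Fin n) ℝ}
    (hf : ∀ a, 0 ≤ eval (cubePoint a) f) :
    ∃ (s : MvPolynomial (Fin n) ℝ) (q : Fin n → MvPolynomial (Fin n) ℝ),
      IsSumSq s ∧ f = s + ∑ j, q j * (X j ^ 2 - 1) := by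
  obtain ⟨s, hs, hsf⟩ := exists_isSumSq_eval_cubePoint_eq hf
  obtain ⟨q, hq⟩ := exists_eq_sum_mul_X_sq_sub_one (f := f - s) fun a => by simp [hsf]
  exact ⟨s, q, hs, by rw [← hq]; ring⟩

end Cube

section Clause

theorem eval_cubePoint_Cpoly {n k : ℕ} (v : Fin k → Fin 3 → Fin n) (b : Fin k → Fin 3 → Bool)
    (a : Fin n → Bool) (i : Fin k) :
    eval (cubePoint a) (Cpoly v b i) = 2 * #{t | a (v i t) = b i t} - 2 := by
  simp only [Cpoly, map_add, map_mul, map_one, eval_C, eval_X, cubePoint, eps_mul_eps,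
    Finset.card_filter, Fin.sum_univ_three]
  push_cast
  ring

variable {n k : ℕ} {v : Fin k → Fin 3 → Fin n} {b : Fin k → Fin 3 → Bool} {a : Fin n → Bool}
  {i : Fin k}

theorem eval_cubePoint_Cpoly_eq_zero (h : ∃! t, a (v i t) = b i t) :
    eval (cubePoint a) (Cpoly v b i) = 0 := by
  rw [eval_cubePoint_Cpoly, (Fintype.existsUnique_iff_card_one _).1 h]
  norm_num

theorem four_le_eval_cubePoint_Cpoly_sq (h : ¬∃! t, a (v i t) = b i t) :
    4 ≤ eval (cubePoint a) (Cpoly v b i) ^ 2 := by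
  rw [Fintype.existsUnique_iff_card_one] at h
  rw [eval_cubePoint_Cpoly]
  rcases Nat.lt_or_gt_of_ne h with h | h
  · rw [Nat.lt_one_iff.1 h]
    norm_num
  · have : (2 : ℝ) ≤ #{t | a (v i t) = b i t} := by exact_mod_cast h
    nlinarith

theorem four_le_eval_cubePoint_sum_Cpoly_sq (h : ¬OneInThreeSat v b) (a : Fin n → Bool) :
    4 ≤ eval (cubePoint a) (∑ i, Cpoly v b i ^ 2) := by
  obtain ⟨i, hi⟩ : ∃ i, ¬∃! t, a (v i t) = b i t := not_forall.1 fun ha => h ⟨a, ha⟩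
  rw [map_sum]
  calc (4 : ℝ) ≤ eval (cubePoint a) (Cpoly v b i) ^ 2 := four_le_eval_cubePoint_Cpoly_sq hi
    _ = eval (cubePoint a) (Cpoly v b i ^ 2) := (map_pow _ _ _).symm
    _ ≤ ∑ i, eval (cubePoint a) (Cpoly v b i ^ 2) :=
      Finset.single_le_sum (f := fun i => eval (cubePoint a) (Cpoly v b i ^ 2))
        (fun _ _ => by rw [map_pow]; positivity) (Finset.mem_univ i)

end Clause

section Certificate

variable {n k : ℕ} {v : Fin k → Fin 3 → Fin n} {b : Fin k → Fin 3 → Bool}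

theorem eval_archGens_eq_zero {a : Fin n → Bool} (ha : ∀ i, ∃! t, a (v i t) = b i t) (y : ℝ)
    (l : (Fin k ⊕ Fin k) ⊕ (Fin n ⊕ Fin n)) :
    eval (Sum.elim (cubePoint a) fun _ => y) (archGens v b l) = 0 := by
  have hC : ∀ i,
      eval (Sum.elim (cubePoint a) fun _ : Unit => y) (rename Sum.inl (Cpoly v b i)) = 0 :=
    fun i => by rw [eval_rename, Sum.elim_comp_inl, eval_cubePoint_Cpoly_eq_zero (ha i)]
  rcases l with (i | i) | (j | j) <;> simp [archGens, hC, cubePoint, eps_sq]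

theorem inQuadraticModule_archGens_of_not_oneInThreeSat (h : ¬OneInThreeSat v b) :
    InQuadraticModule (archGens v b)
      (C ((n : ℝ) + 1) - (∑ j : Fin n, X (Sum.inl j) ^ 2) - X (Sum.inr ()) ^ 2) := by
  obtain ⟨s, q, hs, hsq⟩ := exists_isSumSq_add_sum_mul_X_sq_sub_one
    (f := ∑ i, Cpoly v b i ^ 2 - 4) fun a => by
      simpa [sub_nonneg] using four_le_eval_cubePoint_sum_Cpoly_sq h a
  set Y : MvPolynomial (Fin n ⊕ Unit) ℝ := X (Sum.inr ())
  set c : Fin k → MvPolynomial (Fin n ⊕ Unit) ℝ := fun i => rename Sum.inl (Cpoly v b i)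
  have hsq' := congrArg (rename (Sum.inl : Fin n → Fin n ⊕ Unit)) hsq
  simp only [map_sub, map_add, map_sum, map_mul, map_pow, map_ofNat, rename_X, map_one] at hsq'
  have h4 : (C 4⁻¹ : MvPolynomial (Fin n ⊕ Unit) ℝ) * 4 = 1 := by
    rw [← map_ofNat C 4, ← C_mul]; norm_num
  have key : C ((n : ℝ) + 1) - (∑ j : Fin n, X (Sum.inl j) ^ 2) - Y ^ 2 =
      (1 + (C 2⁻¹ * Y) ^ 2 * rename Sum.inl s) + ∑ j, 1 * archGens v b (.inr (.inl j)) +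
        ∑ j, (C 4⁻¹ * Y ^ 2 * rename Sum.inl (q j)) * archGens v b (.inr (.inr j)) +
        ∑ i, -(C 4⁻¹ * Y * c i) * archGens v b (.inl (.inl i)) := by
    simp only [archGens, Sum.elim_inl, Sum.elim_inr]
    have hn : (C ((n : ℝ) + 1) : MvPolynomial (Fin n ⊕ Unit) ℝ) = n + 1 := by simp
    have h2 : (C 2⁻¹ : MvPolynomial (Fin n ⊕ Unit) ℝ) ^ 2 = C 4⁻¹ := by
      rw [← C_pow]; norm_num
    have e1 : ∑ j : Fin n, 1 * (1 - X (Sum.inl j) ^ 2) =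
        (n : MvPolynomial (Fin n ⊕ Unit) ℝ) - ∑ j : Fin n, X (Sum.inl j) ^ 2 := by
      simp [Finset.sum_sub_distrib]
    have e2 : ∑ j, (C 4⁻¹ * Y ^ 2 * rename Sum.inl (q j)) * (X (Sum.inl j) ^ 2 - 1) =
        C 4⁻¹ * Y ^ 2 * ∑ j, rename Sum.inl (q j) * (X (Sum.inl j) ^ 2 - 1) := by
      rw [Finset.mul_sum]; exact Finset.sum_congr rfl fun _ _ => by ring
    have e3 : ∑ i, -(C 4⁻¹ * Y * c i) * (c i * Y) = -(C 4⁻¹ * Y ^ 2 * ∑ i, c i ^ 2) := by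
      rw [Finset.mul_sum, ← Finset.sum_neg_distrib]
      exact Finset.sum_congr rfl fun _ _ => by ring
    rw [e1, e2, e3, hn]
    linear_combination (C 4⁻¹ * Y ^ 2) * hsq' + Y ^ 2 * h4 - (Y ^ 2 * rename Sum.inl s) * h2
  rw [key]
  refine (((InQuadraticModule.of_isSumSq ?_).add ?_).add ?_).add ?_
  · exact IsSumSq.one.add ((IsSquare.sq _).isSumSq.mul (hs.map _))
  · exact InQuadraticModule.sum fun j _ =>
      InQuadraticModule.mul_gen_of_neg (l' := .inr (.inr j)) (by simp [archGens]) _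
  · exact InQuadraticModule.sum fun j _ =>
      InQuadraticModule.mul_gen_of_neg (l' := .inr (.inl j)) (by simp [archGens]) _
  · exact InQuadraticModule.sum fun i _ =>
      InQuadraticModule.mul_gen_of_neg (l' := .inl (.inr i)) rfl _

end Certificate

theorem quadratic_module_archimedean_iff_not_satisfiable {n k : ℕ}
    (v : Fin k → Fin 3 → Fin n) (b : Fin k → Fin 3 → Bool) :
    (∃ R : ℝ, 0 < R ∧ InQuadraticModule (archGens v b)
        (C R - (∑ j : Fin n, X (Sum.inl j) ^ 2) - X (Sum.inr ()) ^ 2)) ↔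
      ¬ OneInThreeSat v b := by
  constructor
  · rintro ⟨R, -, hR⟩ ⟨a, ha⟩
    have h := hR.eval_nonneg (z := Sum.elim (cubePoint a) fun _ => R + 1)
      fun l => (eval_archGens_eq_zero ha _ l).ge
    simp only [map_sub, eval_C, map_sum, map_pow, eval_X, Sum.elim_inl, Sum.elim_inr, cubePoint,
      eps_sq, sum_const, card_univ, Fintype.card_fin, nsmul_eq_mul, mul_one, sub_nonneg] at h
    nlinarith
  · intro h
    exact ⟨n + 1, by positivity, inQuadraticModule_archGens_of_not_oneInThreeSat h⟩
end
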